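/- With the matrix A, values λ₁, and assumptions (F), (G1), (G2) as above, define v_{1,1} = f(k₁)/(λ₁ + w(k₁)(1 − g(0))), recursively v_{1,i} = (f(k_i) + ∑_{j=1}^{i−1} w(k_j)·g(k_i − k_j)·v_{1,j}) / (λ₁ + w(k_i)(1 − g(0))) for 2 ≤ i ≤ r, and v_{1,r+1} = 1 − ∑_{j=1}^r w(k_j)·v_{1,j}. Then the vector v₁ = (v_{1,1}, ..., v_{1,r}, v_{1,r+1})ᵀ satisfies A·v₁ = λ₁·v₁. -/

import Mathlib

/-!
The weight vector `u = (w(k₁), …, w(k_r), 1)` is a left eigenvector of `A` for `λ₁`: in each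
column, (F) and (G2) turn the sums over the levels `kᵢ` into sums over `[1, k_r]`, which join the
tail sums of the last row, and (G1) evaluates `∑ₘ w(m) g(m - c) = ∑ₘ χ m g(m) + w(c)`.
Since `v_{1,r+1}` is chosen so that `u ⬝ v₁ = 1`, the recursion for `v_{1,i}` is exactly row `i`
of `A v₁ = λ₁ v₁` for `i ≤ r`. The last row then follows from `uᵀ A v₁ = λ₁ uᵀ v₁`, because the
last entry of `u` is nonzero.
-/

open Finset Matrix

theorem Matrix.mulVec_eq_smul_of_vecMul_eq_smul {n R : Type*} [Fintype n] [CommRing R]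
    [NoZeroDivisors R] {A : Matrix n n R} {u v : n → R} {c : R} (p : n)
    (hu : u ᵥ* A = c • u) (hup : u p ≠ 0) (hv : ∀ i ≠ p, (A *ᵥ v) i = c * v i) :
    A *ᵥ v = c • v := by
  set d := A *ᵥ v - c • v
  have hd_off : ∀ i ≠ p, d i = 0 := fun i hi => by simp [d, hv i hi]
  have hud : u ⬝ᵥ d = 0 := by
    rw [dotProduct_sub, dotProduct_mulVec, hu, dotProduct_smul, smul_dotProduct, sub_self]
  rw [dotProduct, sum_eq_single p (fun i _ hi => by rw [hd_off i hi, mul_zero]) (by simp)] at hud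
  have hdp : d p = 0 := (mul_eq_zero.1 hud).resolve_left hup
  refine sub_eq_zero.1 (funext fun i => ?_)
  by_cases hi : i = p
  · exact hi ▸ hdp
  · exact hd_off i hi

theorem sum_Ico_eq_sum_comp_add {β : Type*} [AddCommMonoid β] {r kr B : ℕ} {k : Fin r → ℕ}
    (hk : Function.Injective k) (hk1 : ∀ i, 1 ≤ k i) (hkle : ∀ i, k i ≤ kr) (hB : kr < B)
    {φ : ℕ → β} (hφ : ∀ m, m ≤ kr → (∀ i, m ≠ k i) → φ m = 0) :
    ∑ m ∈ Ico 1 B, φ m = ∑ i, φ (k i) + ∑ m ∈ Ico (kr + 1) B, φ m := by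
  rw [← sum_Ico_consecutive φ (Nat.le_add_left 1 kr) hB]
  congr 1
  refine (sum_of_injOn k hk.injOn (fun i _ => ?_) (fun m hm hnot => ?_) fun _ _ => rfl).symm
  · simpa [Nat.lt_succ_iff] using ⟨hk1 i, hkle i⟩
  · refine hφ m (by simpa [Nat.lt_succ_iff] using (mem_Ico.1 hm).2) fun i him => hnot ?_
    simp [him]

theorem sum_Ico_mul_sub_eq {χ ρ : ℝ} {w g : ℕ → ℝ} {M B : ℕ} (hw : ∀ n, w n = χ * n + ρ)
    (hg0 : g 0 = 0) (hgM : ∀ m, M ≤ m → g m = 0) (hG1 : ∑ m ∈ range B, g m = 1) {c : ℕ}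
    (hc : M + c ≤ B) :
    ∑ m ∈ Ico 1 B, w m * g (m - c) = ∑ m ∈ Ico 1 B, χ * m * g m + w c := by
  have hB : 0 < B := Nat.pos_of_ne_zero (by rintro rfl; simp at hG1)
  suffices ∑ m ∈ range B, w m * g (m - c) = ∑ m ∈ range B, χ * m * g m + w c by
    simpa [sum_range_eq_add_Ico _ hB, hg0] using this
  obtain ⟨N, rfl⟩ := Nat.exists_eq_add_of_le (le_of_add_le_right hc)
  calc ∑ m ∈ range (c + N), w m * g (m - c)
      = ∑ n ∈ range N, w (c + n) * g n := by
        rw [sum_range_add, sum_eq_zero fun m hm => ?_, zero_add]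
        · simp
        · rw [Nat.sub_eq_zero_of_le (mem_range.1 hm).le, hg0, mul_zero]
    _ = ∑ n ∈ range (c + N), w (c + n) * g n :=
        sum_subset (range_subset_range.2 (Nat.le_add_left N c)) fun n _ hn => by
          rw [hgM n (by simp at hn; omega), mul_zero]
    _ = ∑ n ∈ range (c + N), χ * n * g n + w c * ∑ n ∈ range (c + N), g n := by
        rw [mul_sum, ← sum_add_distrib]
        refine sum_congr rfl fun n _ => ?_
        rw [hw, hw]
        push_cast
        ring
    _ = ∑ m ∈ range (c + N), χ * m * g m + w c := by rw [hG1, mul_one]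

noncomputable def intensityMatrix (r : ℕ) (k : Fin r → ℕ) (χ : ℝ) (w f g : ℕ → ℝ) (kr B : ℕ) :
    Matrix (Fin (r + 1)) (Fin (r + 1)) ℝ :=
  of fun i j =>
    if hi : (i : ℕ) < r then
      if hj : (j : ℕ) < r then
        if (i : ℕ) < (j : ℕ) then w (k ⟨j, hj⟩) * f (k ⟨i, hi⟩)
        else if (i : ℕ) = (j : ℕ) then
          w (k ⟨i, hi⟩) * (f (k ⟨i, hi⟩) + g 0 - 1)
        else w (k ⟨j, hj⟩) * (f (k ⟨i, hi⟩) + g (k ⟨i, hi⟩ - k ⟨j, hj⟩))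
      else f (k ⟨i, hi⟩)
    else
      if hj : (j : ℕ) < r then
        w (k ⟨j, hj⟩) *
          ∑ m ∈ Ico (kr + 1) B, w m * (f m + g (m - k ⟨j, hj⟩))
      else
        ∑ m ∈ Ico (kr + 1) B, w m * f m
          + ∑ m ∈ Ico 1 B, χ * m * g m

namespace intensityMatrix

variable {r : ℕ} {k : Fin r → ℕ} {χ : ℝ} {w f g : ℕ → ℝ} {kr B : ℕ}

-- Above the diagonal `k i - k j` truncates to `0`, so the extra term `g 0` vanishes.
theorem castSucc_castSucc (hg0 : g 0 = 0) (hk : Monotone k) (i j : Fin r) :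
    intensityMatrix r k χ w f g kr B i.castSucc j.castSucc =
      w (k j) * (f (k i) + g (k i - k j)) - if i = j then w (k i) else 0 := by
  simp only [intensityMatrix, of_apply, Fin.val_castSucc, Fin.is_lt, dite_true, Fin.eta,
    Fin.lt_def.symm, Fin.val_inj]
  rcases lt_trichotomy i j with h | rfl | h
  · simp [h, h.ne, Nat.sub_eq_zero_of_le (hk h.le), hg0]
  · simp [hg0]
    ring
  · simp [h.not_gt, h.ne']

theorem castSucc_last (i : Fin r) :
    intensityMatrix r k χ w f g kr B i.castSucc (Fin.last r) = f (k i) := by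
  simp [intensityMatrix]

theorem last_castSucc (j : Fin r) :
    intensityMatrix r k χ w f g kr B (Fin.last r) j.castSucc =
      w (k j) * ∑ m ∈ Ico (kr + 1) B, w m * (f m + g (m - k j)) := by
  simp [intensityMatrix]

theorem last_last :
    intensityMatrix r k χ w f g kr B (Fin.last r) (Fin.last r) =
      ∑ m ∈ Ico (kr + 1) B, w m * f m + ∑ m ∈ Ico 1 B, χ * m * g m := by
  simp [intensityMatrix]

theorem mulVec_castSucc (hg0 : g 0 = 0) (hk : Monotone k) {v : Fin (r + 1) → ℝ}
    (hvlast : v (Fin.last r) = 1 - ∑ j : Fin r, w (k j) * v j.castSucc) (i : Fin r) :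
    (intensityMatrix r k χ w f g kr B *ᵥ v) i.castSucc =
      f (k i) + ∑ j : Fin r, w (k j) * g (k i - k j) * v j.castSucc - w (k i) * v i.castSucc := by
  rw [mulVec, dotProduct, Fin.sum_univ_castSucc, castSucc_last, hvlast]
  simp only [castSucc_castSucc hg0 hk, sub_mul, ite_mul, zero_mul, sum_sub_distrib,
    sum_ite_eq, mem_univ, if_true, mul_add, add_mul, sum_add_distrib]
  have hf : ∑ j : Fin r, w (k j) * f (k i) * v j.castSucc =
      f (k i) * ∑ j : Fin r, w (k j) * v j.castSucc := by
    rw [mul_sum]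
    exact sum_congr rfl fun j _ => by ring
  rw [hf]
  ring

theorem mulVec_castSucc_eq (hg0 : g 0 = 0) (hk : Monotone k) {v : Fin (r + 1) → ℝ} {c : ℝ}
    (hvlast : v (Fin.last r) = 1 - ∑ j : Fin r, w (k j) * v j.castSucc) (i : Fin r)
    (hvi : v i.castSucc * (c + w (k i)) =
      f (k i) + ∑ j ∈ univ.filter (· < i), w (k j) * g (k i - k j) * v j.castSucc) :
    (intensityMatrix r k χ w f g kr B *ᵥ v) i.castSucc = c * v i.castSucc := by
  have hlower : ∑ j ∈ univ.filter (· < i), w (k j) * g (k i - k j) * v j.castSucc =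
      ∑ j : Fin r, w (k j) * g (k i - k j) * v j.castSucc := by
    refine sum_filter_of_ne fun j _ hj => ?_
    by_contra hij
    rw [Nat.sub_eq_zero_of_le (hk (not_lt.1 hij)), hg0] at hj
    simp at hj
  rw [mulVec_castSucc hg0 hk hvlast, ← hlower]
  linear_combination -hvi

theorem snoc_vecMul {ρ : ℝ} {M : ℕ} (hk : StrictMono k) (hk1 : ∀ i, 1 ≤ k i)
    (hkle : ∀ i, k i ≤ kr) (hw : ∀ n, w n = χ * n + ρ) (hg0 : g 0 = 0)
    (hgM : ∀ m, M ≤ m → g m = 0) (hB : M + kr < B)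
    (hF : ∀ m, m ≤ kr → (∀ i, m ≠ k i) → f m = 0) (hG1 : ∑ m ∈ range B, g m = 1)
    (hG2 : ∀ m, m ≤ kr → (∀ i, m ≠ k i) → ∀ j, g (m - k j) = 0) :
    Fin.snoc (α := fun _ => ℝ) (fun j => w (k j)) 1 ᵥ* intensityMatrix r k χ w f g kr B =
      (∑ m ∈ Ico 1 B, (w m * f m + χ * m * g m)) •
        Fin.snoc (α := fun _ => ℝ) (fun j => w (k j)) 1 := by
  have hsplit (φ : ℕ → ℝ) :=
    sum_Ico_eq_sum_comp_add (B := B) hk.injective hk1 hkle (by omega) (φ := φ)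
  have hf : ∑ m ∈ Ico 1 B, w m * f m =
      ∑ i, w (k i) * f (k i) + ∑ m ∈ Ico (kr + 1) B, w m * f m :=
    hsplit _ fun m hm hne => by rw [hF m hm hne, mul_zero]
  rw [sum_add_distrib, hf]
  funext j
  induction j using Fin.lastCases with
  | last =>
    simp [vecMul, dotProduct, Fin.sum_univ_castSucc, castSucc_last, last_last, add_assoc]
  | cast j =>
    have hg : ∑ m ∈ Ico 1 B, w m * g (m - k j) =
        ∑ i, w (k i) * g (k i - k j) + ∑ m ∈ Ico (kr + 1) B, w m * g (m - k j) :=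
      hsplit _ fun m hm hne => by rw [hG2 m hm hne j, mul_zero]
    have hshift := sum_Ico_mul_sub_eq hw hg0 hgM hG1 (c := k j) (by grind)
    have hcol : ∑ i, w (k i) *
          (w (k j) * (f (k i) + g (k i - k j)) - if i = j then w (k i) else 0) =
        w (k j) * (∑ i, w (k i) * f (k i) + ∑ i, w (k i) * g (k i - k j)) - w (k j) * w (k j) := by
      simp only [mul_sub, mul_ite, mul_zero, sum_sub_distrib, sum_ite_eq', mem_univ, if_true,
        mul_add, sum_add_distrib, mul_sum]
      congr 1
      congr 1 <;> exact sum_congr rfl fun i _ => by ring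
    simp only [vecMul, dotProduct, Fin.sum_univ_castSucc, Fin.snoc_castSucc, Fin.snoc_last,
      castSucc_castSucc hg0 hk.monotone, last_castSucc, Pi.smul_apply, smul_eq_mul]
    rw [hcol, one_mul]
    simp only [mul_add, sum_add_distrib]
    linear_combination w (k j) * (hshift - hg)

end intensityMatrix

/-- The vector `v₁` defined by the recursion (5)/(14) is a right eigenvector of
the intensity matrix `A` for the eigenvalue `λ₁`. -/
theorem stmt_1
    (r : ℕ) (hr : 0 < r)
    (χ ρ : ℝ) (f g : ℕ → ℝ)
    (k : Fin r → ℕ) (hk1 : ∀ i, 1 ≤ k i) (hkmono : StrictMono k)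
    (w : ℕ → ℝ) (hw : ∀ n, w n = χ * n + ρ)
    (hg0 : g 0 = 0)
    (M : ℕ) (hgM : ∀ m, M ≤ m → g m = 0)
    (kr : ℕ) (hkr : kr = k ⟨r - 1, by omega⟩)
    (B : ℕ) (hB : B = M + kr + 1)
    -- assumption (F)
    (hF : ∀ m, m ≤ kr → (∀ i : Fin r, m ≠ k i) → f m = 0)
    -- assumption (G1)
    (hG1 : ∑ m ∈ Finset.range B, g m = 1)
    -- assumption (G2)
    (hG2 : ∀ m, m ≤ kr → (∀ i : Fin r, m ≠ k i) → ∀ j : Fin r, g (m - k j) = 0)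
    (lam1 : ℝ)
    (hlam1 : lam1 = ∑ m ∈ Finset.Ico 1 B, (w m * f m + χ * m * g m))
    (A : Matrix (Fin (r + 1)) (Fin (r + 1)) ℝ)
    (hA : ∀ i j : Fin (r + 1),
      A i j =
        if hi : (i : ℕ) < r then
          if hj : (j : ℕ) < r then
            if (i : ℕ) < (j : ℕ) then w (k ⟨j, hj⟩) * f (k ⟨i, hi⟩)
            else if (i : ℕ) = (j : ℕ) then
              w (k ⟨i, hi⟩) * (f (k ⟨i, hi⟩) + g 0 - 1)
            else w (k ⟨j, hj⟩) * (f (k ⟨i, hi⟩) + g (k ⟨i, hi⟩ - k ⟨j, hj⟩))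
          else f (k ⟨i, hi⟩)
        else
          if hj : (j : ℕ) < r then
            w (k ⟨j, hj⟩) *
              ∑ m ∈ Finset.Ico (kr + 1) B, w m * (f m + g (m - k ⟨j, hj⟩))
          else
            ∑ m ∈ Finset.Ico (kr + 1) B, w m * f m
              + ∑ m ∈ Finset.Ico 1 B, χ * m * g m)
    (v : Fin (r + 1) → ℝ)
    (hvdenom : ∀ i : Fin r, lam1 + w (k i) * (1 - g 0) ≠ 0)
    (hv : ∀ i : Fin r,
      v i.castSucc =
        (f (k i) + ∑ j ∈ Finset.univ.filter (fun j : Fin r => j < i),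
            w (k j) * g (k i - k j) * v j.castSucc)
          / (lam1 + w (k i) * (1 - g 0)))
    (hvlast : v (Fin.last r) = 1 - ∑ j : Fin r, w (k j) * v j.castSucc) :
    A.mulVec v = lam1 • v := by
  have hkle : ∀ i, k i ≤ kr := fun i => hkr ▸ hkmono.monotone (Fin.le_def.2 (by grind))
  subst hlam1
  obtain rfl : A = intensityMatrix r k χ w f g kr B := Matrix.ext hA
  refine mulVec_eq_smul_of_vecMul_eq_smul (Fin.last r)
    (intensityMatrix.snoc_vecMul hkmono hk1 hkle hw hg0 hgM (by omega) hF hG1 hG2) (by simp)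
    fun i hi => ?_
  obtain ⟨i, rfl⟩ := Fin.exists_castSucc_eq.2 hi
  refine intensityMatrix.mulVec_castSucc_eq hg0 hkmono.monotone hvlast i ?_
  have hden := hvdenom i
  rw [hg0, sub_zero, mul_one] at hden
  rw [hv i, hg0, sub_zero, mul_one, div_mul_cancel₀ _ hden]
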